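/- (Theorem on group-invariant subsystems, equivalence of conditions 1 and 5.) Let G be a group with a unitary representation π : G → U(H^B) on the finite-dimensional Hilbert space H^B = ℂ^B, let H = (H^A ⊗ H^B) ⊕ K with H^A = ℂ^A, and let Φ be a quantum channel on B(H) given in operator-sum form Φ(ρ) = Σ_a E_a ρ E_a†. Then B is group invariant under Φ — i.e. there exists U ∈ π(G) such that for all operators σ^A on H^A and σ^B on H^B there is an operator τ^A on H^A with Φ(σ^A ⊗ σ^B) = τ^A ⊗ U σ^B U† — if and only if there exists U ∈ π(G) such that the subspace H^A ⊗ H^B of H is invariant for every operator (1^A ⊗ U†) E_a, and each restricted operator (1^A ⊗ U†) E_a P^{AB}, viewed as an operator on H^A ⊗ H^B, belongs to the operator algebra B(H^A) ⊗ 1^B (i.e. is of the form X ⊗ 1^B for some operator X on H^A). -/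

import Mathlib

/-!
Conjugating by the unitary `1^A ⊗ U†` reduces everything to `U = 1`. Write each Kraus operator
in block form with respect to `H = (H^A ⊗ H^B) ⊕ K`, with `P_a` its `(H^A ⊗ H^B)`-block and
`R_a` its `K × (H^A ⊗ H^B)`-block. Condition 1 then says `Σ P_a σ P_a† = τ ⊗ σ^B` and
`Σ R_a σ R_a† = 0`. The second, at `σ = 1`, forces every `R_a = 0`: this is the invariance of
`H^A ⊗ H^B`. For the first, take `σ = |c⟩⟨c| ⊗ |χ⟩⟨χ|`: the `(a, a)` block of the output is
`Σ_j |M_j χ⟩⟨M_j χ| = τ_aa |χ⟩⟨χ|`, where `M_j` is the `(a, c)` block of `P_j`, so each `M_j χ`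
is orthogonal to `χ^⊥`, hence parallel to `χ`. A matrix with every vector as an eigenvector is
scalar, so all blocks of `P_j` are scalar, i.e. `P_j = X_j ⊗ 1`. The converse is a computation.
-/

open Matrix
open scoped ComplexOrder Kronecker

/-- The tensor extension `id_k ⊗ Φ` of a linear map between matrix algebras, via the
Kronecker-product identification. -/
def tensorExt {ι₁ ι₂ : Type*} [Fintype ι₁] [Fintype ι₂]
    (Φ : Matrix ι₁ ι₁ ℂ →ₗ[ℂ] Matrix ι₂ ι₂ ℂ)
    (k : ℕ) (M : Matrix (Fin k × ι₁) (Fin k × ι₁) ℂ) :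
    Matrix (Fin k × ι₂) (Fin k × ι₂) ℂ :=
  Matrix.of fun p q => Φ (Matrix.of fun a b => M (p.1, a) (q.1, b)) p.2 q.2

/-- Complete positivity of a linear map between matrix algebras. -/
def IsCompletelyPositive {ι₁ ι₂ : Type*} [Fintype ι₁] [Fintype ι₂]
    (Φ : Matrix ι₁ ι₁ ℂ →ₗ[ℂ] Matrix ι₂ ι₂ ℂ) : Prop :=
  ∀ (k : ℕ) (M : Matrix (Fin k × ι₁) (Fin k × ι₁) ℂ),
    M.PosSemidef → (tensorExt Φ k M).PosSemidef

variable {A B K : Type*}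

/-- An operator on `H^A ⊗ H^B`, regarded as an operator on `H = (H^A ⊗ H^B) ⊕ K`
that is zero on `K`. -/
def embedAB (M : Matrix (A × B) (A × B) ℂ) :
    Matrix ((A × B) ⊕ K) ((A × B) ⊕ K) ℂ :=
  Matrix.fromBlocks M 0 0 0

/-- The orthogonal projection `P^{AB}` of `H = (H^A ⊗ H^B) ⊕ K` onto `H^A ⊗ H^B`. -/
def projAB [DecidableEq A] [DecidableEq B] :
    Matrix ((A × B) ⊕ K) ((A × B) ⊕ K) ℂ :=
  Matrix.fromBlocks 1 0 0 0

/-- The partial trace over `A` applied to the `H^A ⊗ H^B` block of an operator on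
`H = (H^A ⊗ H^B) ⊕ K`. -/
noncomputable def trA [Fintype A] (M : Matrix ((A × B) ⊕ K) ((A × B) ⊕ K) ℂ) : Matrix B B ℂ :=
  Matrix.of fun b b' => ∑ a : A, M (Sum.inl (a, b)) (Sum.inl (a, b'))


/-- For a unitary `U` on `H^B`, the operator on `H = (H^A ⊗ H^B) ⊕ K` acting as the
Kronecker product `1^A ⊗ U` on the summand `H^A ⊗ H^B` and as the identity on `K`. -/
def oneTensor [Fintype A] [DecidableEq A] [DecidableEq B] [DecidableEq K]
    (U : Matrix B B ℂ) : Matrix ((A × B) ⊕ K) ((A × B) ⊕ K) ℂ :=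
  Matrix.fromBlocks ((1 : Matrix A A ℂ) ⊗ₖ U) 0 0 (1 : Matrix K K ℂ)

namespace Matrix

section Sums

variable {ι l m n o R : Type*}

theorem toBlocks₁₁_sum [AddCommMonoid R] (s : Finset ι) (f : ι → Matrix (n ⊕ o) (l ⊕ m) R) :
    toBlocks₁₁ (∑ i ∈ s, f i) = ∑ i ∈ s, toBlocks₁₁ (f i) := by
  ext; simp [toBlocks₁₁, sum_apply]

theorem toBlocks₂₂_sum [AddCommMonoid R] (s : Finset ι) (f : ι → Matrix (n ⊕ o) (l ⊕ m) R) :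
    toBlocks₂₂ (∑ i ∈ s, f i) = ∑ i ∈ s, toBlocks₂₂ (f i) := by
  ext; simp [toBlocks₂₂, sum_apply]

theorem sum_kronecker {p : Type*} [NonUnitalNonAssocSemiring R] (s : Finset ι)
    (f : ι → Matrix l m R) (M : Matrix n p R) : (∑ i ∈ s, f i) ⊗ₖ M = ∑ i ∈ s, f i ⊗ₖ M := by
  ext; simp [sum_apply, Finset.sum_mul]

theorem sum_mul_mul_conjTranspose_mul_left [Fintype ι] [Fintype n] [CommSemiring R] [StarRing R]
    (W : Matrix n n R) (E : ι → Matrix n n R) (ρ : Matrix n n R) :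
    ∑ i, (W * E i) * ρ * (W * E i)ᴴ = W * (∑ i, E i * ρ * (E i)ᴴ) * Wᴴ := by
  simp [Finset.mul_sum, Finset.sum_mul, conjTranspose_mul, Matrix.mul_assoc]

end Sums

section Positivity

variable {ι m n R : Type*} [Fintype ι] [Fintype m] [Fintype n]
  [CommRing R] [StarRing R] [PartialOrder R] [StarOrderedRing R] [NoZeroDivisors R]

theorem conjTranspose_mulVec_eq_zero_of_sum_mul_conjTranspose_mulVec_eq_zero
    (X : ι → Matrix m n R) {v : m → R} (h : (∑ i, X i * (X i)ᴴ) *ᵥ v = 0) (i : ι) :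
    (X i)ᴴ *ᵥ v = 0 := by
  have hsum : ∑ j, star ((X j)ᴴ *ᵥ v) ⬝ᵥ ((X j)ᴴ *ᵥ v) = 0 := by
    simpa [sum_mulVec, dotProduct_sum, ← mulVec_mulVec, dotProduct_mulVec, star_mulVec] using
      congrArg (star v ⬝ᵥ ·) h
  exact dotProduct_star_self_eq_zero.mp <|
    congrFun ((Fintype.sum_eq_zero_iff_of_nonneg fun j => dotProduct_star_self_nonneg _).mp hsum) i

theorem eq_zero_of_sum_mul_conjTranspose_eq_zero
    (X : ι → Matrix m n R) (h : ∑ i, X i * (X i)ᴴ = 0) (i : ι) : X i = 0 := by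
  classical
  rw [← conjTranspose_eq_zero]
  ext j k
  simpa [mulVec_single_one] using congrFun
    (conjTranspose_mulVec_eq_zero_of_sum_mul_conjTranspose_mulVec_eq_zero X
      (v := Pi.single k 1) (by rw [h, zero_mulVec]) i) j

theorem dotProduct_eq_zero_of_sum_vecMulVec_mulVec_eq_zero
    (x : ι → n → R) {v : n → R} (h : (∑ i, vecMulVec (x i) (star (x i))) *ᵥ v = 0) (i : ι) :
    star (x i) ⬝ᵥ v = 0 := by
  have := conjTranspose_mulVec_eq_zero_of_sum_mul_conjTranspose_mulVec_eq_zero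
    (fun i => replicateCol Unit (x i)) (v := v)
    (by simpa [conjTranspose_replicateCol, ← vecMulVec_eq] using h) i
  simpa [conjTranspose_replicateCol, replicateRow_mulVec_eq_const] using congrFun this ()

end Positivity

theorem mem_span_singleton_of_forall_dotProduct_eq_zero {n K : Type*} [Fintype n] [Field K]
    [StarRing K] [PartialOrder K] [StarOrderedRing K] {u y : n → K}
    (h : ∀ w, star u ⬝ᵥ w = 0 → star y ⬝ᵥ w = 0) : y ∈ K ∙ u := by
  set S := star u ⬝ᵥ u
  set T := star u ⬝ᵥ y
  set w := S • y - T • u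
  have hu : star u ⬝ᵥ w = 0 := by
    simp only [w, dotProduct_sub, dotProduct_smul, smul_eq_mul, S, T]; ring
  have hw : star w ⬝ᵥ w = 0 := by
    simp only [w, star_sub, star_smul, sub_dotProduct, smul_dotProduct, h w hu, hu, smul_zero,
      sub_zero]
  rcases eq_or_ne u 0 with rfl | hu0
  · simpa using h y (by simp)
  · have hS : S ≠ 0 := by simpa [S] using hu0
    refine Submodule.mem_span_singleton.mpr ⟨S⁻¹ * T, ?_⟩
    rw [mul_smul, ← sub_eq_zero.mp (dotProduct_star_self_eq_zero.mp hw), inv_smul_smul₀ hS]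

theorem exists_eq_smul_one_of_forall_mulVec_mem_span_singleton {n K : Type*} [Fintype n]
    [DecidableEq n] [Field K] (M : Matrix n n K) (h : ∀ v, M *ᵥ v ∈ K ∙ v) :
    ∃ c : K, M = c • 1 := by
  obtain ⟨c, hc⟩ := M.mulVecLin.exists_eq_smul_id_of_forall_notLinearIndependent fun v hli => by
    rcases eq_or_ne v 0 with rfl | hv
    · exact hli.ne_zero 0 rfl
    · obtain ⟨a, ha⟩ := Submodule.mem_span_singleton.mp (h v)
      exact (LinearIndependent.pair_iff' hv).mp hli a ha
  refine ⟨c, ?_⟩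
  ext i j
  simpa [mulVec_single_one, one_apply, Pi.single_apply, eq_comm] using
    congrFun (LinearMap.congr_fun hc (Pi.single j 1)) i

section Blocks

/-! `(comp A C B D R).symm P a c : Matrix B D R` is the `(a, c)` block of
`P : Matrix (A × B) (C × D) R`. -/

variable {A B C D R : Type*}

theorem mul_single_kronecker_mul_conjTranspose_apply [Fintype C] [Fintype D] [DecidableEq C]
    [CommSemiring R] [StarRing R] (P : Matrix (A × B) (C × D) R) (c : C) (σ : Matrix D D R)
    (a a' : A) (b b' : B) :
    (P * (single c c (1 : R) ⊗ₖ σ) * Pᴴ) (a, b) (a', b') =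
      ((comp A C B D R).symm P a c * σ * ((comp A C B D R).symm P a' c)ᴴ) b b' := by
  simp [mul_apply, Fintype.sum_prod_type, single_apply, ite_and, Finset.sum_mul]

theorem exists_eq_kronecker_one_of_forall_comp_symm_eq_smul_one [DecidableEq D] [Semiring R]
    {P : Matrix (A × D) (C × D) R} (h : ∀ a c, ∃ x : R, (comp A C D D R).symm P a c = x • 1) :
    ∃ X : Matrix A C R, P = X ⊗ₖ 1 := by
  choose X hX using h
  refine ⟨of X, ?_⟩
  ext ⟨a, d⟩ ⟨c, d'⟩
  simpa using congrFun (congrFun (hX a c) d) d'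

end Blocks

theorem exists_eq_kronecker_one_of_forall_sum_mul_kronecker_mul {ι A B 𝕜 : Type*}
    [Fintype ι] [Fintype A] [Fintype B] [DecidableEq A] [DecidableEq B]
    [Field 𝕜] [StarRing 𝕜] [PartialOrder 𝕜] [StarOrderedRing 𝕜]
    (P : ι → Matrix (A × B) (A × B) 𝕜)
    (h : ∀ σA σB, ∃ τA : Matrix A A 𝕜, ∑ i, P i * (σA ⊗ₖ σB) * (P i)ᴴ = τA ⊗ₖ σB) (i : ι) :
    ∃ X : Matrix A A 𝕜, P i = X ⊗ₖ 1 := by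
  refine exists_eq_kronecker_one_of_forall_comp_symm_eq_smul_one fun a c =>
    exists_eq_smul_one_of_forall_mulVec_mem_span_singleton _ fun χ => ?_
  obtain ⟨τ, hτ⟩ := h (single c c 1) (vecMulVec χ (star χ))
  set M := fun j => (comp A A B B 𝕜).symm (P j) a c
  have hblock : ∑ j, vecMulVec (M j *ᵥ χ) (star (M j *ᵥ χ)) = τ a a • vecMulVec χ (star χ) := by
    ext b b'
    have := congrFun (congrFun hτ (a, b)) (a, b')
    simp only [sum_apply, mul_single_kronecker_mul_conjTranspose_apply] at this
    simpa [M, sum_apply, mul_vecMulVec, vecMulVec_mul, star_mulVec] using this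
  refine mem_span_singleton_of_forall_dotProduct_eq_zero fun w hw =>
    dotProduct_eq_zero_of_sum_vecMulVec_mulVec_eq_zero (fun j => M j *ᵥ χ) ?_ i
  rw [hblock, smul_mulVec, vecMulVec_mulVec, hw]
  simp

end Matrix

theorem Unitary.mul_mul_star_inj {R : Type*} [Monoid R] [StarMul R] (u : unitary R) {y z : R} :
    u * y * star (u : R) = u * z * star (u : R) ↔ y = z := by
  rw [← Unitary.coe_star, Unitary.mul_left_inj, Unitary.mul_right_inj]

section EmbedAB

theorem embedAB_sum {ι : Type*} (s : Finset ι) (f : ι → Matrix (A × B) (A × B) ℂ) :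
    (embedAB (∑ i ∈ s, f i) : Matrix ((A × B) ⊕ K) _ ℂ) = ∑ i ∈ s, embedAB (f i) := by
  ext (_ | _) (_ | _) <;> simp [embedAB, Matrix.sum_apply]

variable [Fintype A] [Fintype B] [Fintype K]
  (F : Matrix ((A × B) ⊕ K) ((A × B) ⊕ K) ℂ) (M : Matrix (A × B) (A × B) ℂ)

theorem toBlocks₁₁_mul_embedAB_mul_conjTranspose :
    toBlocks₁₁ (F * embedAB M * Fᴴ) = toBlocks₁₁ F * M * (toBlocks₁₁ F)ᴴ := by
  rw [← fromBlocks_toBlocks F]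
  simp [embedAB, fromBlocks_multiply, fromBlocks_conjTranspose]

theorem toBlocks₂₂_mul_embedAB_mul_conjTranspose :
    toBlocks₂₂ (F * embedAB M * Fᴴ) = toBlocks₂₁ F * M * (toBlocks₂₁ F)ᴴ := by
  rw [← fromBlocks_toBlocks F]
  simp [embedAB, fromBlocks_multiply, fromBlocks_conjTranspose]

theorem mul_embedAB_mul_conjTranspose_of_toBlocks₂₁_eq_zero (h : toBlocks₂₁ F = 0) :
    F * embedAB M * Fᴴ = embedAB (toBlocks₁₁ F * M * (toBlocks₁₁ F)ᴴ) := by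
  rw [← fromBlocks_toBlocks F, h]
  simp [embedAB, fromBlocks_multiply, fromBlocks_conjTranspose]

variable [DecidableEq A] [DecidableEq B]

theorem projAB_mul_mul_projAB_eq_mul_projAB_iff :
    projAB * F * projAB = F * projAB ↔ toBlocks₂₁ F = 0 := by
  rw [← fromBlocks_toBlocks F]
  simp [projAB, fromBlocks_multiply, eq_comm]

theorem toBlocks₁₁_mul_projAB : toBlocks₁₁ (F * projAB) = toBlocks₁₁ F := by
  rw [← fromBlocks_toBlocks F]
  simp [projAB, fromBlocks_multiply]

end EmbedAB

section OneTensor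

variable [Fintype A] [DecidableEq A] [DecidableEq B] [DecidableEq K]

theorem oneTensor_one : (oneTensor 1 : Matrix ((A × B) ⊕ K) _ ℂ) = 1 := by
  simp [oneTensor]

theorem oneTensor_conjTranspose (U : Matrix B B ℂ) :
    (oneTensor U : Matrix ((A × B) ⊕ K) _ ℂ)ᴴ = oneTensor Uᴴ := by
  simp [oneTensor, fromBlocks_conjTranspose, conjTranspose_kronecker]

variable [Fintype B] [Fintype K]

theorem oneTensor_mul_oneTensor (U V : Matrix B B ℂ) :
    (oneTensor U * oneTensor V : Matrix ((A × B) ⊕ K) _ ℂ) = oneTensor (U * V) := by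
  simp [oneTensor, fromBlocks_multiply, ← mul_kronecker_mul]

theorem oneTensor_mem_unitaryGroup {U : Matrix B B ℂ} (hU : U ∈ unitaryGroup B ℂ) :
    (oneTensor U : Matrix ((A × B) ⊕ K) _ ℂ) ∈ unitaryGroup _ ℂ := by
  rw [mem_unitaryGroup_iff, star_eq_conjTranspose, oneTensor_conjTranspose,
    oneTensor_mul_oneTensor, ← star_eq_conjTranspose, mem_unitaryGroup_iff.mp hU, oneTensor_one]

theorem oneTensor_mul_embedAB_kronecker_mul_oneTensor
    (U V : Matrix B B ℂ) (τ : Matrix A A ℂ) (σ : Matrix B B ℂ) :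
    (oneTensor U * embedAB (τ ⊗ₖ σ) * oneTensor V : Matrix ((A × B) ⊕ K) _ ℂ) =
      embedAB (τ ⊗ₖ (U * σ * V)) := by
  simp [oneTensor, embedAB, fromBlocks_multiply, ← mul_kronecker_mul]

end OneTensor

theorem forall_sum_mul_embedAB_mul_conjTranspose_iff {ι : Type*} [Fintype ι]
    [Fintype A] [Fintype B] [Fintype K] [DecidableEq A] [DecidableEq B]
    (F : ι → Matrix ((A × B) ⊕ K) ((A × B) ⊕ K) ℂ) :
    (∀ (σA : Matrix A A ℂ) (σB : Matrix B B ℂ), ∃ τA : Matrix A A ℂ,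
        ∑ i, F i * embedAB (σA ⊗ₖ σB) * (F i)ᴴ = embedAB (τA ⊗ₖ σB)) ↔
      (∀ i, projAB * F i * projAB = F i * projAB) ∧
        ∀ i, ∃ X : Matrix A A ℂ, toBlocks₁₁ (F i * projAB) = X ⊗ₖ (1 : Matrix B B ℂ) := by
  simp only [projAB_mul_mul_projAB_eq_mul_projAB_iff, toBlocks₁₁_mul_projAB]
  constructor
  · intro h
    refine ⟨eq_zero_of_sum_mul_conjTranspose_eq_zero _ ?_,
      exists_eq_kronecker_one_of_forall_sum_mul_kronecker_mul _ fun σA σB => ?_⟩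
    · obtain ⟨τ, hτ⟩ := h 1 1
      have := congrArg toBlocks₂₂ hτ
      simp only [toBlocks₂₂_sum, toBlocks₂₂_mul_embedAB_mul_conjTranspose] at this
      simpa [embedAB] using this
    · obtain ⟨τ, hτ⟩ := h σA σB
      have := congrArg toBlocks₁₁ hτ
      simp only [toBlocks₁₁_sum, toBlocks₁₁_mul_embedAB_mul_conjTranspose] at this
      exact ⟨τ, by simpa [embedAB] using this⟩
  · rintro ⟨hR, hP⟩ σA σB
    choose X hX using hP
    refine ⟨∑ i, X i * σA * (X i)ᴴ, ?_⟩
    simp [mul_embedAB_mul_conjTranspose_of_toBlocks₂₁_eq_zero _ _ (hR _), hX,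
      conjTranspose_kronecker, ← mul_kronecker_mul, ← embedAB_sum, sum_kronecker]

theorem sum_mul_mul_conjTranspose_eq_embedAB_iff_oneTensor_conj {ι : Type*} [Fintype ι]
    [Fintype A] [Fintype B] [Fintype K] [DecidableEq A] [DecidableEq B] [DecidableEq K]
    {U : Matrix B B ℂ} (hU : U ∈ unitaryGroup B ℂ) (E : ι → Matrix ((A × B) ⊕ K) ((A × B) ⊕ K) ℂ)
    (ρ : Matrix ((A × B) ⊕ K) ((A × B) ⊕ K) ℂ) (τA : Matrix A A ℂ) (σB : Matrix B B ℂ) :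
    ∑ i, E i * ρ * (E i)ᴴ = embedAB (τA ⊗ₖ (U * σB * Uᴴ)) ↔
      ∑ i, (oneTensor Uᴴ * E i) * ρ * (oneTensor Uᴴ * E i)ᴴ = embedAB (τA ⊗ₖ σB) := by
  let W : unitary (Matrix ((A × B) ⊕ K) ((A × B) ⊕ K) ℂ) :=
    ⟨oneTensor Uᴴ, oneTensor_mem_unitaryGroup (Unitary.star_mem hU)⟩
  have hUU : Uᴴ * U = 1 := mem_unitaryGroup_iff'.mp hU
  have hσB : Uᴴ * (U * σB * Uᴴ) * U = σB := by
    simp only [← Matrix.mul_assoc, hUU, Matrix.one_mul]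
    rw [Matrix.mul_assoc, hUU, Matrix.mul_one]
  rw [sum_mul_mul_conjTranspose_mul_left, ← Unitary.mul_mul_star_inj W]
  simp only [W, star_eq_conjTranspose, oneTensor_conjTranspose, conjTranspose_conjTranspose,
    oneTensor_mul_embedAB_kronecker_mul_oneTensor, hσB]

theorem groupInvariant_iff_cond5_general
    {G : Type*} [Group G] {N : ℕ}
    [Fintype A] [Fintype B] [Fintype K] [DecidableEq A] [DecidableEq B] [DecidableEq K]
    (π : G →* Matrix.unitaryGroup B ℂ)
    (Φ : Matrix ((A × B) ⊕ K) ((A × B) ⊕ K) ℂ →ₗ[ℂ] Matrix ((A × B) ⊕ K) ((A × B) ⊕ K) ℂ)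
    (E : Fin N → Matrix ((A × B) ⊕ K) ((A × B) ⊕ K) ℂ)
    (hE : ∀ ρ, Φ ρ = ∑ a, E a * ρ * (E a)ᴴ) :
    (∃ g : G, ∀ (σA : Matrix A A ℂ) (σB : Matrix B B ℂ), ∃ τA : Matrix A A ℂ,
        Φ (embedAB (σA ⊗ₖ σB)) =
          embedAB (τA ⊗ₖ ((π g : Matrix B B ℂ) * σB * (π g : Matrix B B ℂ)ᴴ))) ↔
      (∃ g : G,
        (∀ a : Fin N,
          projAB * (oneTensor ((π g : Matrix B B ℂ)ᴴ) * E a) * projAB =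
            oneTensor ((π g : Matrix B B ℂ)ᴴ) * E a * projAB) ∧
        (∀ a : Fin N, ∃ X : Matrix A A ℂ,
          Matrix.toBlocks₁₁ (oneTensor ((π g : Matrix B B ℂ)ᴴ) * E a * projAB) =
            X ⊗ₖ (1 : Matrix B B ℂ))) := by
  refine exists_congr fun g => Iff.trans ?_
    (forall_sum_mul_embedAB_mul_conjTranspose_iff fun a => oneTensor (π g : Matrix B B ℂ)ᴴ * E a)
  refine forall₂_congr fun σA σB => exists_congr fun τA => ?_
  rw [hE]
  exact sum_mul_mul_conjTranspose_eq_embedAB_iff_oneTensor_conj (π g).2 E _ τA σB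

/-- **Group-invariant subsystems: conditions 1 and 5 are equivalent.**
Given a Kraus decomposition `Φ(ρ) = Σ_a E_a ρ E_a†`, `B` is group invariant under `Φ`
iff there is `U = π g` such that the subspace `H^A ⊗ H^B` is invariant for every
operator `(1^A ⊗ U†) E_a`, and each restricted operator `(1^A ⊗ U†) E_a P^{AB}`,
viewed as an operator on `H^A ⊗ H^B`, is of the form `X ⊗ 1^B`. -/
theorem groupInvariant_iff_cond5
    {G : Type*} [Group G] {N : ℕ}
    [Fintype A] [Fintype B] [Fintype K] [DecidableEq A] [DecidableEq B] [DecidableEq K]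
    (π : G →* Matrix.unitaryGroup B ℂ)
    (Φ : Matrix ((A × B) ⊕ K) ((A × B) ⊕ K) ℂ →ₗ[ℂ] Matrix ((A × B) ⊕ K) ((A × B) ⊕ K) ℂ)
    (hCP : IsCompletelyPositive Φ)
    (hTP : ∀ ρ, (Φ ρ).trace = ρ.trace)
    (E : Fin N → Matrix ((A × B) ⊕ K) ((A × B) ⊕ K) ℂ)
    (hE : ∀ ρ, Φ ρ = ∑ a, E a * ρ * (E a)ᴴ) :
    (∃ g : G, ∀ (σA : Matrix A A ℂ) (σB : Matrix B B ℂ), ∃ τA : Matrix A A ℂ,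
        Φ (embedAB (σA ⊗ₖ σB)) =
          embedAB (τA ⊗ₖ ((π g : Matrix B B ℂ) * σB * (π g : Matrix B B ℂ)ᴴ))) ↔
      (∃ g : G,
        (∀ a : Fin N,
          projAB * (oneTensor ((π g : Matrix B B ℂ)ᴴ) * E a) * projAB =
            oneTensor ((π g : Matrix B B ℂ)ᴴ) * E a * projAB) ∧
        (∀ a : Fin N, ∃ X : Matrix A A ℂ,
          Matrix.toBlocks₁₁ (oneTensor ((π g : Matrix B B ℂ)ᴴ) * E a * projAB) =
            X ⊗ₖ (1 : Matrix B B ℂ))) :=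
  groupInvariant_iff_cond5_general π Φ E hE
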